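/- For every n ≥ 1 one has F_n(s,t) ≡ F_{n−1}(s^p, t^p) modulo p^n in ℤ[s,t], i.e. F_n(s,t) − F_{n−1}(s^p,t^p) ∈ p^n·ℤ[s,t]. -/
import Mathlib


open MvPolynomial

/-- The polynomials `F_n ∈ ℤ[s,t]` (with `s = X 0`, `t = X 1`), defined recursively by
`F_0(s,t) = s` and `F_n(s,t) = F_{n-1}(s,t)^p - p · F_{n-1}(t,0)`. -/
noncomputable def F (p : ℕ) : ℕ → MvPolynomial (Fin 2) ℤ
  | 0 => X 0
  | n + 1 => F p n ^ p - (p : MvPolynomial (Fin 2) ℤ) * (aeval ![X 1, 0] (F p n))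

/-- If `p^n ∣ a - b` with `n ≥ 1`, then `p^(n+1) ∣ a^p - b^p`. -/
lemma pow_dvd_pow_sub_pow_aux {R : Type*} [CommRing R] {p n : ℕ} (hp : p.Prime)
    (hn : 1 ≤ n) {a b : R} (h : (p : R) ^ n ∣ a - b) :
    (p : R) ^ (n + 1) ∣ a ^ p - b ^ p := by
  have hab : (p : R) ∣ a - b := dvd_trans (dvd_pow_self _ (by omega)) h
  have hdvd : (p : R) ∣ ∑ i ∈ Finset.range p, a ^ i * b ^ (p - 1 - i) := by
    rw [← Ideal.mem_span_singleton] at hab ⊢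
    have hq : Ideal.Quotient.mk (Ideal.span {(p : R)}) a = Ideal.Quotient.mk _ b := by
      rwa [Ideal.Quotient.eq]
    rw [← Ideal.Quotient.eq_zero_iff_mem, map_sum]
    have hcongr : ∀ i ∈ Finset.range p,
        Ideal.Quotient.mk (Ideal.span {(p : R)}) (a ^ i * b ^ (p - 1 - i))
          = (Ideal.Quotient.mk (Ideal.span {(p : R)}) b) ^ (p - 1) := by
      intro i hi
      rw [map_mul, map_pow, map_pow, hq, ← pow_add]
      congr 1
      simp only [Finset.mem_range] at hi
      omega
    rw [Finset.sum_congr rfl hcongr, Finset.sum_const, Finset.card_range, nsmul_eq_mul]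
    have hp0 : ((p : ℕ) : R ⧸ Ideal.span {(p : R)}) = 0 := by
      rw [← map_natCast (Ideal.Quotient.mk (Ideal.span {(p : R)})),
        Ideal.Quotient.eq_zero_iff_mem]
      exact Ideal.mem_span_singleton_self _
    rw [hp0, zero_mul]
  have hfact : a ^ p - b ^ p = (∑ i ∈ Finset.range p, a ^ i * b ^ (p - 1 - i)) * (a - b) :=
    (geom_sum₂_mul a b p).symm
  rw [hfact, pow_succ']
  exact mul_dvd_mul hdvd h

/-- For `n ≥ 1` one has `F_n(s,t) ≡ F_{n-1}(s^p, t^p)` modulo `p^n` in `ℤ[s,t]`. -/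
theorem F_congr_subst_pow_mod (p : ℕ) (hp : p.Prime) (n : ℕ) (hn : 1 ≤ n) :
    F p n - aeval ![X 0 ^ p, X 1 ^ p] (F p (n - 1)) ∈
      Ideal.span {(p : MvPolynomial (Fin 2) ℤ) ^ n} := by
  set g : Fin 2 → MvPolynomial (Fin 2) ℤ := ![X 0 ^ p, X 1 ^ p] with hg
  -- composition identities
  have comp1 : ∀ f : MvPolynomial (Fin 2) ℤ,
      aeval (R := ℤ) g (aeval (R := ℤ) ![X 1, (0 : MvPolynomial (Fin 2) ℤ)] f) = aeval (R := ℤ) ![(X 1 : MvPolynomial (Fin 2) ℤ) ^ p, 0] f := by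
    intro f
    have key := comp_aeval (R := ℤ) (σ := Fin 2) (f := ![X 1, (0 : MvPolynomial (Fin 2) ℤ)])
      (φ := aeval (R := ℤ) g)
    have h2 := AlgHom.congr_fun key f
    simp only [AlgHom.coe_comp, Function.comp_apply] at h2
    rw [h2]
    have hf : (fun i => aeval (R := ℤ) g (![X 1, 0] i))
        = ![(X 1 : MvPolynomial (Fin 2) ℤ) ^ p, 0] := by
      funext i
      fin_cases i <;> simp [hg]
    exact congrArg (fun v => aeval (R := ℤ) v f) hf
  have comp2 : ∀ f : MvPolynomial (Fin 2) ℤ,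
      aeval (R := ℤ) ![X 1, (0 : MvPolynomial (Fin 2) ℤ)] (aeval (R := ℤ) g f) = aeval (R := ℤ) ![(X 1 : MvPolynomial (Fin 2) ℤ) ^ p, 0] f := by
    intro f
    have key := comp_aeval (R := ℤ) (σ := Fin 2) (f := g)
      (φ := aeval (R := ℤ) ![X 1, (0 : MvPolynomial (Fin 2) ℤ)])
    have h2 := AlgHom.congr_fun key f
    simp only [AlgHom.coe_comp, Function.comp_apply] at h2
    rw [h2]
    have hf : (fun i => aeval (R := ℤ) ![X 1, (0 : MvPolynomial (Fin 2) ℤ)] (g i))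
        = ![(X 1 : MvPolynomial (Fin 2) ℤ) ^ p, 0] := by
      funext i
      fin_cases i <;> simp [hg, zero_pow hp.ne_zero]
    exact congrArg (fun v => aeval (R := ℤ) v f) hf
  induction n, hn using Nat.le_induction with
  | base =>
    show F p 1 - aeval g (F p 0) ∈ _
    simp only [F, map_pow, aeval_X]
    have h0 : (![X 1, (0 : MvPolynomial (Fin 2) ℤ)]) 0 = X 1 := rfl
    have h1 : g 0 = X 0 ^ p := rfl
    rw [h0, h1, pow_one, Ideal.mem_span_singleton]
    exact ⟨-X 1, by ring⟩
  | succ n hn ih =>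
    obtain ⟨m, rfl⟩ : ∃ m, n = m + 1 := ⟨n - 1, (Nat.succ_pred_eq_of_pos hn).symm⟩
    simp only [Nat.add_sub_cancel] at ih ⊢
    obtain ⟨c, hc⟩ := Ideal.mem_span_singleton.1 ih
    -- unfold F at level m+2 and expand the substituted polynomial
    have hFm2 : F p (m + 2) = F p (m + 1) ^ p
        - (p : MvPolynomial (Fin 2) ℤ) * aeval ![X 1, 0] (F p (m + 1)) := rfl
    have hFm1 : F p (m + 1) = F p m ^ p
        - (p : MvPolynomial (Fin 2) ℤ) * aeval ![X 1, 0] (F p m) := rfl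
    have hE : aeval g (F p (m + 1)) = (aeval g (F p m)) ^ p
        - (p : MvPolynomial (Fin 2) ℤ) * aeval ![X 1, 0] (aeval g (F p m)) := by
      rw [hFm1, map_sub, map_mul, map_pow, map_natCast, comp1, comp2]
    -- the two ingredients
    obtain ⟨d, hd⟩ : (p : MvPolynomial (Fin 2) ℤ) ^ (m + 2)
        ∣ F p (m + 1) ^ p - (aeval g (F p m)) ^ p :=
      pow_dvd_pow_sub_pow_aux hp (by omega) ⟨c, hc⟩
    have hB : aeval ![X 1, 0] (F p (m + 1)) - aeval ![X 1, 0] (aeval g (F p m))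
        = (p : MvPolynomial (Fin 2) ℤ) ^ (m + 1) * aeval ![X 1, 0] c := by
      rw [← map_sub, hc, map_mul, map_pow, map_natCast]
    rw [Ideal.mem_span_singleton]
    refine ⟨d - aeval ![X 1, 0] c, ?_⟩
    rw [hFm2, hE]
    have := hB
    ring_nf
    ring_nf at hd hB
    linear_combination hd - (p : MvPolynomial (Fin 2) ℤ) * hB
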